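/- arXiv:math/0201005 — 2 statements merged into one kernel-verified Lean document; each statement's English description precedes it below -/
import Mathlib

section
/- For w > 0 and real m, m' not both zero, e^{-2πw|mm'|} = √w · |m'| · ∫_{-∞}^{∞} e^{-t/2}·e^{-πw(m²eᵗ + m'²e^{-t})} dt, provided m' ≠ 0. -/
/-!
For `a, b > 0`, translating `t` by `log (b / a)` turns `a² eᵗ + b² e⁻ᵗ` into `ab (eᵗ + e⁻ᵗ)`.
Since `exp (-s (eᵗ + e⁻ᵗ))` is even, `e^{-t/2}` may then be replaced by its even part
`cosh (t/2)`, and the substitution `u = 2 sinh (t/2)`, with `du = cosh (t/2) dt` and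
`eᵗ + e⁻ᵗ = u² + 2`, turns the integral into `e^{-2s}` times a Gaussian integral.
When `a = 0` the substitution `u = e^{-t/2}` gives a half Gaussian integral directly.
-/

open Real MeasureTheory Set

section HalfAngleSubstitution

variable {E : Type*} [NormedAddCommGroup E] [NormedSpace ℝ E]

lemma hasDerivAt_two_mul_sinh_half (τ : ℝ) :
    HasDerivAt (fun τ => 2 * sinh (τ / 2)) (cosh (τ / 2)) τ :=
  (((Real.hasDerivAt_sinh _).comp τ ((hasDerivAt_id τ).div_const 2)).const_mul 2).congr_deriv
    (by simp only [id]; ring)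

lemma strictMono_two_mul_sinh_half : StrictMono fun τ : ℝ => 2 * sinh (τ / 2) :=
  fun x y hxy => by
    have := sinh_strictMono (div_lt_div_of_pos_right hxy two_pos)
    linarith

lemma range_two_mul_sinh_half : range (fun τ : ℝ => 2 * sinh (τ / 2)) = univ := by
  refine eq_univ_of_forall fun u => ?_
  obtain ⟨x, hx⟩ := sinh_surjective (u / 2)
  exact ⟨2 * x, by simp [hx]; ring⟩

lemma integral_cosh_half_smul_comp_two_mul_sinh_half (f : ℝ → E) :
    ∫ τ, cosh (τ / 2) • f (2 * sinh (τ / 2)) = ∫ u, f u := by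
  have := integral_image_eq_integral_abs_deriv_smul MeasurableSet.univ
    (fun τ _ => (hasDerivAt_two_mul_sinh_half τ).hasDerivWithinAt)
    strictMono_two_mul_sinh_half.injective.injOn f
  simpa [image_univ, range_two_mul_sinh_half, abs_of_pos (cosh_pos _)] using this.symm

lemma integrable_cosh_half_smul_comp_two_mul_sinh_half_iff {f : ℝ → E} :
    Integrable (fun τ => cosh (τ / 2) • f (2 * sinh (τ / 2))) ↔ Integrable f := by
  have := integrableOn_image_iff_integrableOn_abs_deriv_smul MeasurableSet.univ
    (fun τ _ => (hasDerivAt_two_mul_sinh_half τ).hasDerivWithinAt)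
    strictMono_two_mul_sinh_half.injective.injOn f
  simpa [image_univ, range_two_mul_sinh_half, abs_of_pos (cosh_pos _)] using this.symm

end HalfAngleSubstitution

lemma exp_add_exp_neg_eq_two_mul_sinh_half_sq_add_two (τ : ℝ) :
    exp τ + exp (-τ) = (2 * sinh (τ / 2)) ^ 2 + 2 := by
  have h₀ : exp (τ / 2) * exp (-(τ / 2)) = 1 := by rw [← exp_add]; simp
  have hpos : exp τ = exp (τ / 2) ^ 2 := by rw [← exp_nat_mul]; ring_nf
  have hneg : exp (-τ) = exp (-(τ / 2)) ^ 2 := by rw [← exp_nat_mul]; ring_nf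
  rw [sinh_eq, hpos, hneg]
  linear_combination 2 * h₀

lemma integral_eq_integral_add_comp_neg_div_two {f : ℝ → ℝ} (hf : Integrable f) :
    ∫ x, f x = ∫ x, (f x + f (-x)) / 2 := by
  rw [integral_div, integral_add hf hf.comp_neg, integral_neg_eq_self]
  ring

lemma integral_exp_neg_half_mul_exp_neg_mul_exp_add_exp_neg {s : ℝ} (hs : 0 < s) :
    ∫ τ, exp (-τ / 2) * exp (-(s * (exp τ + exp (-τ))))
      = √(π / s) * exp (-(2 * s)) := by
  set φ : ℝ → ℝ := fun τ => exp (-(s * (exp τ + exp (-τ))))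
  have hφ : ∀ τ, cosh (τ / 2) * φ τ
      = exp (-(2 * s)) * (cosh (τ / 2) • exp (-s * (2 * sinh (τ / 2)) ^ 2)) := by
    intro τ
    simp only [φ, exp_add_exp_neg_eq_two_mul_sinh_half_sq_add_two, smul_eq_mul]
    rw [mul_left_comm, ← exp_add]
    ring_nf
  have hcosh : Integrable fun τ => cosh (τ / 2) * φ τ := by
    simp only [hφ]
    exact (integrable_cosh_half_smul_comp_two_mul_sinh_half_iff.2
      (integrable_exp_neg_mul_sq hs)).const_mul _
  have hint : Integrable fun τ => exp (-τ / 2) * φ τ := by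
    refine (hcosh.const_mul 2).mono' (by fun_prop) (ae_of_all _ fun τ => ?_)
    rw [norm_of_nonneg (by positivity), cosh_eq, neg_div]
    have := exp_pos (τ / 2)
    have := exp_pos (-(s * (exp τ + exp (-τ))))
    nlinarith
  calc ∫ τ, exp (-τ / 2) * φ τ
      = ∫ τ, cosh (τ / 2) * φ τ := by
        rw [integral_eq_integral_add_comp_neg_div_two hint]
        congr 1 with τ
        simp only [φ, cosh_eq, neg_neg, neg_div]
        ring_nf
    _ = √(π / s) * exp (-(2 * s)) := by
        rw [integral_congr_ae (ae_of_all _ hφ), integral_const_mul,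
          integral_cosh_half_smul_comp_two_mul_sinh_half (fun u => exp (-s * u ^ 2)),
          integral_gaussian]
        ring

lemma integral_exp_neg_half_mul_exp_neg_mul_exp_neg (s : ℝ) :
    ∫ t, exp (-t / 2) * exp (-(s * exp (-t))) = √(π / s) := by
  have hderiv : ∀ t ∈ univ,
      HasDerivWithinAt (fun t => exp (-t / 2)) (-(exp (-t / 2) / 2)) univ t := fun t _ =>
    (((hasDerivAt_id t).neg.div_const 2).exp.congr_deriv (by simp; ring)).hasDerivWithinAt
  have hinj : InjOn (fun t : ℝ => exp (-t / 2)) univ := fun x _ y _ h => by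
    have := exp_injective h
    linarith
  have himage : (fun t : ℝ => exp (-t / 2)) '' univ = Ioi 0 := by
    rw [image_univ, ← range_exp]
    exact (Function.Surjective.range_comp (fun y => ⟨-2 * y, by ring⟩) exp)
  have := integral_image_eq_integral_abs_deriv_smul MeasurableSet.univ hderiv hinj
    fun x => exp (-s * x ^ 2)
  rw [himage, integral_gaussian_Ioi, setIntegral_univ] at this
  have hsq : ∀ t : ℝ, exp (-t / 2) ^ 2 = exp (-t) := fun t => by rw [← exp_nat_mul]; ring_nf
  simp only [abs_neg, abs_div, abs_of_pos (exp_pos _), abs_two, smul_eq_mul, hsq,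
    neg_mul, div_mul_eq_mul_div, integral_div] at this
  linarith

lemma integral_exp_neg_half_mul_exp_neg_mul_sq_exp_add_eq_sqrt_div_mul {a b : ℝ} (ha : 0 < a)
    (hb : 0 < b) (c : ℝ) :
    ∫ t, exp (-t / 2) * exp (-(c * (a ^ 2 * exp t + b ^ 2 * exp (-t))))
      = √(a / b) * ∫ τ, exp (-τ / 2) * exp (-(c * (a * b) * (exp τ + exp (-τ)))) := by
  have hexp : exp (log (b / a)) = b / a := exp_log (by positivity)
  rw [← integral_add_right_eq_self _ (log (b / a)), ← integral_const_mul]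
  congr 1 with τ
  have hhalf : exp (-(τ + log (b / a)) / 2) = √(a / b) * exp (-τ / 2) := by
    rw [show -(τ + log (b / a)) / 2 = -τ / 2 + (-log (b / a)) / 2 by ring, exp_add,
      mul_comm, exp_half (-_), exp_neg (log _), hexp, inv_div]
  rw [hhalf, neg_add, exp_add, exp_add, exp_neg (log _), hexp]
  field_simp

lemma integral_exp_neg_half_mul_exp_neg_mul_sq_exp_add {c : ℝ} (hc : 0 < c) (a : ℝ) {b : ℝ}
    (hb : b ≠ 0) :
    ∫ t, exp (-t / 2) * exp (-(c * (a ^ 2 * exp t + b ^ 2 * exp (-t))))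
      = √(π / c) / |b| * exp (-(2 * c * |a * b|)) := by
  have hb' : 0 < |b| := abs_pos.2 hb
  rw [← sq_abs a, ← sq_abs b, abs_mul]
  rcases (abs_nonneg a).eq_or_lt with ha | ha
  · rw [← ha]
    simp only [zero_pow two_ne_zero, zero_mul, zero_add, mul_zero, neg_zero, exp_zero, mul_one,
      ← mul_assoc]
    rw [integral_exp_neg_half_mul_exp_neg_mul_exp_neg, sqrt_div' π (by positivity),
      sqrt_div' π hc.le, sqrt_mul hc.le, sqrt_sq hb'.le]
    field_simp
  · rw [integral_exp_neg_half_mul_exp_neg_mul_sq_exp_add_eq_sqrt_div_mul ha hb',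
      integral_exp_neg_half_mul_exp_neg_mul_exp_add_exp_neg (by positivity), ← mul_assoc,
      ← sqrt_mul (by positivity)]
    congr 2
    rw [show |a| / |b| * (π / (c * (|a| * |b|))) = π / c / |b| ^ 2 by field_simp,
      sqrt_div' _ (sq_nonneg _), sqrt_sq hb'.le]
    ring

/-- Hecke's integral representation: for `w > 0` and real `m, m'` with `m' ≠ 0`,
`e^{-2πw|mm'|} = √w · |m'| · ∫ e^{-t/2} e^{-πw(m²eᵗ + m'²e^{-t})} dt`. -/
theorem hecke_integral_representation (w m m' : ℝ) (hw : 0 < w) (hm' : m' ≠ 0) :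
    Real.exp (-(2 * π * w * |m * m'|))
      = Real.sqrt w * |m'| *
          ∫ t : ℝ, Real.exp (-t / 2) *
            Real.exp (-(π * w * (m ^ 2 * Real.exp t + m' ^ 2 * Real.exp (-t)))) := by
  rw [integral_exp_neg_half_mul_exp_neg_mul_sq_exp_add (by positivity) m hm',
    show π / (π * w) = w⁻¹ by field_simp, sqrt_inv]
  have hsqrt_w : 0 < √w := sqrt_pos.2 hw
  have habs_m' : 0 < |m'| := abs_pos.2 hm'
  field_simp
end

section
/- Let K = ℚ(√d) be a real quadratic field with d a squarefree positive integer, with nontrivial Galois automorphism l ↦ l'. Let L ⊆ K be a subgroup of (K,+) that is free abelian of rank 2 spanning K over ℚ. Then for every real t, the set Λ_t = { l·e^{t/2} + i·l'·e^{-t/2} : l ∈ L } is a lattice in ℂ, i.e., a discrete cocompact subgroup of (ℂ,+). -/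
open Real Complex

/-! Since `l ↦ σ l e^{t/2} + i σ (c l) e^{-t/2}` is additive, `Λ_t` is the image of
`L = ℤ l₁ + ℤ l₂`, i.e. the `ℤ`-span of the images `v₁, v₂` of `l₁, l₂`, and it is a lattice as
soon as `v₁, v₂` are `ℝ`-linearly independent. Up to the positive factor `e^{t/2} e^{-t/2}` their
determinant is `σ l₁ σ' l₂ - σ l₂ σ' l₁` with `σ' = σ ∘ c`. If it vanished, writing
`1 = q₁ l₁ + q₂ l₂` with `q₁, q₂ ∈ ℚ` would force `σ = σ'` on `l₁, l₂`, hence on their `ℚ`-span `K`. -/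

theorem IsZLattice.compactSpace_quotient {E : Type*} [NormedAddCommGroup E] [NormedSpace ℝ E]
    [FiniteDimensional ℝ E] (L : Submodule ℤ E) [DiscreteTopology L] [IsZLattice ℝ L] :
    CompactSpace (E ⧸ L.toAddSubgroup) := by
  refine ⟨?_⟩
  simpa [Set.range_eq_univ.mpr QuotientAddGroup.mk_surjective] using
    IsZLattice.isCompact_range_of_periodic L _ continuous_quotient_mk' fun z w hw =>
      QuotientAddGroup.eq_iff_sub_mem.mpr (by simpa using hw)

theorem RingHom.eq_of_eqOn_of_span_rat_eq_top {K R : Type*} [Ring K] [Algebra ℚ K] [Ring R]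
    [Algebra ℚ R] {σ τ : K →+* R} {s : Set K} (hs : Submodule.span ℚ s = ⊤)
    (h : Set.EqOn σ τ s) : σ = τ := by
  have := LinearMap.ext_on hs (f := σ.toRatAlgHom.toLinearMap) (g := τ.toRatAlgHom.toLinearMap) h
  ext x
  exact LinearMap.congr_fun this x

theorem RingHom.mul_sub_mul_ne_zero_of_ne {K R : Type*} [Ring K] [Algebra ℚ K] [CommRing R]
    [Algebra ℚ R] {σ τ : K →+* R} (hστ : σ ≠ τ) {l₁ l₂ : K}
    (hspan : Submodule.span ℚ {l₁, l₂} = ⊤) : σ l₁ * τ l₂ - σ l₂ * τ l₁ ≠ 0 := by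
  intro hdet
  obtain ⟨q₁, q₂, hq⟩ := Submodule.mem_span_pair.mp (hspan ▸ Submodule.mem_top : (1 : K) ∈ _)
  have hone : ∀ ρ : K →+* R, algebraMap ℚ R q₁ * ρ l₁ + algebraMap ℚ R q₂ * ρ l₂ = 1 := by
    intro ρ
    simpa [map_rat_smul, Algebra.smul_def] using congrArg ρ hq
  refine hστ (eq_of_eqOn_of_span_rat_eq_top hspan ?_)
  simp only [Set.EqOn, Set.mem_insert_iff, Set.mem_singleton_iff, forall_eq_or_imp, forall_eq]
  constructor
  · linear_combination τ l₁ * hone σ - σ l₁ * hone τ + algebraMap ℚ R q₂ * hdet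
  · linear_combination τ l₂ * hone σ - σ l₂ * hone τ - algebraMap ℚ R q₁ * hdet

theorem Submodule.span_addSubgroupClosure {R M : Type*} [Ring R] [AddCommGroup M] [Module R M]
    (s : Set M) : span R (AddSubgroup.closure s : Set M) = span R s :=
  le_antisymm (span_le.mpr <| (AddSubgroup.closure_le (span R s).toAddSubgroup).mpr subset_span)
    (span_mono AddSubgroup.subset_closure)

theorem Complex.linearIndependent_pair_of_re_mul_im_sub_ne_zero {z w : ℂ}
    (h : z.re * w.im - w.re * z.im ≠ 0) : LinearIndependent ℝ ![z, w] := by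
  refine LinearIndependent.pair_iff.mpr fun s u hsu => ?_
  have hre : s * z.re + u * w.re = 0 := by simpa using congrArg re hsu
  have him : s * z.im + u * w.im = 0 := by simpa using congrArg im hsu
  refine ⟨(mul_eq_zero.mp ?_).resolve_right h, (mul_eq_zero.mp ?_).resolve_right h⟩
  · linear_combination w.im * hre - w.re * him
  · linear_combination z.re * him - z.im * hre

section heckeEmbedding

variable {K : Type*} [Ring K]

noncomputable def heckeEmbedding (σ τ : K →+* ℝ) (t : ℝ) : K →+ ℂ where
  toFun l := ((σ l * Real.exp (t / 2) : ℝ) : ℂ) + I * ((τ l * Real.exp (-t / 2) : ℝ) : ℂ)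
  map_zero' := by simp
  map_add' a b := by push_cast [map_add]; ring

@[simp]
theorem heckeEmbedding_re (σ τ : K →+* ℝ) (t : ℝ) (l : K) :
    (heckeEmbedding σ τ t l).re = σ l * Real.exp (t / 2) := by
  simp [heckeEmbedding, -ofReal_mul]

@[simp]
theorem heckeEmbedding_im (σ τ : K →+* ℝ) (t : ℝ) (l : K) :
    (heckeEmbedding σ τ t l).im = τ l * Real.exp (-t / 2) := by
  simp [heckeEmbedding, -ofReal_mul]

theorem linearIndependent_heckeEmbedding_pair [Algebra ℚ K] {σ τ : K →+* ℝ} (hστ : σ ≠ τ)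
    {l₁ l₂ : K} (hspan : Submodule.span ℚ {l₁, l₂} = ⊤) (t : ℝ) :
    LinearIndependent ℝ ![heckeEmbedding σ τ t l₁, heckeEmbedding σ τ t l₂] := by
  refine Complex.linearIndependent_pair_of_re_mul_im_sub_ne_zero ?_
  have hdet := σ.mul_sub_mul_ne_zero_of_ne hστ hspan
  simp only [heckeEmbedding_re, heckeEmbedding_im]
  convert mul_ne_zero hdet (mul_pos (exp_pos (t / 2)) (exp_pos (-t / 2))).ne' using 1
  ring

end heckeEmbedding

theorem hecke_lattice_is_lattice_general
    (K : Type) [Field K] [Algebra ℚ K]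
    (σ : K →+* ℝ) (c : K ≃ₐ[ℚ] K) (hc : σ.comp (c : K →+* K) ≠ σ)
    (L : AddSubgroup K) (l₁ l₂ : K)
    (hL : L = AddSubgroup.closure {l₁, l₂})
    (hspan : Submodule.span ℚ (L : Set K) = ⊤)
    (t : ℝ) :
    ∃ Λ : AddSubgroup ℂ,
      (Λ : Set ℂ) =
        {z : ℂ | ∃ l ∈ L,
          z = ((σ l * Real.exp (t / 2) : ℝ) : ℂ) +
              Complex.I * ((σ (c l) * Real.exp (-t / 2) : ℝ) : ℂ)} ∧
      DiscreteTopology Λ ∧ CompactSpace (ℂ ⧸ Λ) := by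
  set φ := heckeEmbedding σ (σ.comp (c : K →+* K)) t
  rw [hL, Submodule.span_addSubgroupClosure] at hspan
  -- `PeriodPair` provides the discreteness and `IsZLattice` instances for `ℤ v₁ + ℤ v₂`.
  let P : PeriodPair := ⟨φ l₁, φ l₂, linearIndependent_heckeEmbedding_pair hc.symm hspan t⟩
  have hP : P.lattice.toAddSubgroup = L.map φ := by
    rw [PeriodPair.lattice, Submodule.span_int_eq_addSubgroupClosure, hL,
      AddMonoidHom.map_closure, Set.image_pair]
  refine ⟨P.lattice.toAddSubgroup, ?_, inferInstanceAs (DiscreteTopology P.lattice),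
    IsZLattice.compactSpace_quotient P.lattice⟩
  rw [hP]
  ext z
  simp [φ, heckeEmbedding, eq_comm]

/-- Let `K = ℚ(√d)` be a real quadratic field (`d` squarefree positive, `√d ∈ K`,
`[K : ℚ] = 2`), with a real embedding `σ` and nontrivial Galois automorphism `c`
(so `l' = σ (c l)`).  Let `L ⊆ K` be a free abelian subgroup of rank 2 spanning
`K` over `ℚ`.  Then for every real `t`, the set
`Λ_t = { l e^{t/2} + i l' e^{-t/2} : l ∈ L }` is a lattice in `ℂ`: it is (the
underlying set of) a discrete and cocompact additive subgroup of `ℂ`. -/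
theorem hecke_lattice_is_lattice
    (d : ℤ) (hd : Squarefree d) (hdpos : 0 < d)
    (K : Type) [Field K] [Algebra ℚ K] (h2 : Module.finrank ℚ K = 2)
    (x : K) (hx : x ^ 2 = (d : K)) (hxirr : ¬ ∃ q : ℚ, (q : K) = x)
    (σ : K →+* ℝ) (c : K ≃ₐ[ℚ] K) (hc : σ.comp (c : K →+* K) ≠ σ)
    (L : AddSubgroup K) (l₁ l₂ : K)
    (hL : L = AddSubgroup.closure {l₁, l₂})
    (hind : LinearIndependent ℚ ![l₁, l₂])
    (hspan : Submodule.span ℚ (L : Set K) = ⊤)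
    (t : ℝ) :
    ∃ Λ : AddSubgroup ℂ,
      (Λ : Set ℂ) =
        {z : ℂ | ∃ l ∈ L,
          z = ((σ l * Real.exp (t / 2) : ℝ) : ℂ) +
              Complex.I * ((σ (c l) * Real.exp (-t / 2) : ℝ) : ℂ)} ∧
      DiscreteTopology Λ ∧ CompactSpace (ℂ ⧸ Λ) :=
  hecke_lattice_is_lattice_general K σ c hc L l₁ l₂ hL hspan t
end
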